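/- Fix p₀*, p₁*, p₂* > 0 with p₀* + p₁* + p₂* < 1, arising from a valid two-item model. For every s with p₁*/p₀* < s < (1 - p₀* - p₂*)/p₀*, the weights w_{11} = s, w_{22} = 1/p₀* - 1 - s, w_{21} = (1 - p₀* - p₂* - p₀* s)/(p₂* s), w_{12} = (p₀* s - p₁*)/(p₁*(1/p₀* - 1 - s)) are all nonnegative and satisfy: 1/(1 + w_{11} + w_{22}) = p₀*, p₀* w_{11}/(1 + w_{22} w_{12}) = p₁*, and p₀* w_{22}/(1 + w_{11} w_{21}) = p₂*. -/

import Mathlib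

/-!
Setting `w₂₂ = 1/p₀ - 1 - s` makes `1 + w₁₁ + w₂₂ = 1/p₀`, and the remaining two equations are
both instances of the identity `a / (1 + c · (a - b)/(b c)) = b`: with `a = p₀ s`, `c = w₂₂`
for `p₁`, and with `a = p₀ w₂₂ = 1 - p₀ - p₀ s`, `c = s` for `p₂`. The bounds on `s` are exactly
`p₁ < p₀ s < 1 - p₀ - p₂`, which make every numerator and denominator positive.
-/

theorem div_one_add_mul_div_sub_eq {K : Type*} [Field K] {a b c : K} (ha : a ≠ 0) (hb : b ≠ 0)
    (hc : c ≠ 0) : a / (1 + c * ((a - b) / (b * c))) = b := by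
  have hden : 1 + c * ((a - b) / (b * c)) = a / b := by
    field_simp
    ring
  rw [hden, div_div_cancel₀ ha]

theorem twoItem_underspecified_family_general (p0 p1 p2 : ℝ) (hp0 : 0 < p0) (hp1 : 0 < p1)
    (hp2 : 0 < p2)
    (s : ℝ) (hs1 : p1 / p0 < s) (hs2 : s < (1 - p0 - p2) / p0) :
    0 ≤ s ∧ 0 ≤ 1 / p0 - 1 - s ∧
    0 ≤ (1 - p0 - p2 - p0 * s) / (p2 * s) ∧
    0 ≤ (p0 * s - p1) / (p1 * (1 / p0 - 1 - s)) ∧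
    1 / (1 + s + (1 / p0 - 1 - s)) = p0 ∧
    p0 * s / (1 + (1 / p0 - 1 - s) * ((p0 * s - p1) / (p1 * (1 / p0 - 1 - s)))) = p1 ∧
    p0 * (1 / p0 - 1 - s) / (1 + s * ((1 - p0 - p2 - p0 * s) / (p2 * s))) = p2 := by
  have hs : 0 < s := (div_pos hp1 hp0).trans hs1
  have hlow : p1 < p0 * s := by rwa [div_lt_iff₀' hp0] at hs1
  have hhigh : p0 * s < 1 - p0 - p2 := by rwa [lt_div_iff₀' hp0] at hs2
  have hw22 : p0 * (1 / p0 - 1 - s) = 1 - p0 - p0 * s := by field_simp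
  have hw22_pos : 0 < 1 / p0 - 1 - s :=
    pos_of_mul_pos_right (hw22 ▸ by linarith : 0 < p0 * (1 / p0 - 1 - s)) hp0.le
  refine ⟨hs.le, hw22_pos.le, div_nonneg (by linarith) (by positivity),
    div_nonneg (by linarith) (by positivity), ?_, ?_, ?_⟩
  · rw [show 1 + s + (1 / p0 - 1 - s) = 1 / p0 by ring, one_div_one_div]
  · exact div_one_add_mul_div_sub_eq (by positivity) hp1.ne' hw22_pos.ne'
  · rw [hw22, show 1 - p0 - p2 - p0 * s = 1 - p0 - p0 * s - p2 by ring]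
    exact div_one_add_mul_div_sub_eq (by linarith) hp2.ne' hs.ne'

/-- The one-parameter family of two-item model weights all reproducing the same marginal set
probabilities `(p₀, p₁, p₂)`, demonstrating underspecification. -/
theorem twoItem_underspecified_family (p0 p1 p2 : ℝ) (hp0 : 0 < p0) (hp1 : 0 < p1)
    (hp2 : 0 < p2) (hsum : p0 + p1 + p2 < 1)
    (s : ℝ) (hs1 : p1 / p0 < s) (hs2 : s < (1 - p0 - p2) / p0) :
    0 ≤ s ∧ 0 ≤ 1 / p0 - 1 - s ∧
    0 ≤ (1 - p0 - p2 - p0 * s) / (p2 * s) ∧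
    0 ≤ (p0 * s - p1) / (p1 * (1 / p0 - 1 - s)) ∧
    1 / (1 + s + (1 / p0 - 1 - s)) = p0 ∧
    p0 * s / (1 + (1 / p0 - 1 - s) * ((p0 * s - p1) / (p1 * (1 / p0 - 1 - s)))) = p1 ∧
    p0 * (1 / p0 - 1 - s) / (1 + s * ((1 - p0 - p2 - p0 * s) / (p2 * s))) = p2 :=
  twoItem_underspecified_family_general p0 p1 p2 hp0 hp1 hp2 s hs1 hs2
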